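/- For every N ≥ 2, every KC-PMI P on N parties, and every N-party entropy vector S (extended by the purification convention), the following are equivalent: (a) I(Y:Z) = 0 for every MI instance {Y,Z} ∈ P; (b) for every Y ⊆ ⟦N⟧ with |Y| ≥ 2 and β(Y) not positive, S_Y = Σ_{Z ∈ Γ(Y)} S_Z, where Γ(Y) is the partition of Y whose parts are the elements of Max(pos_<(Y)) (which are pairwise disjoint in this case) together with the singletons of the parties of Y not contained in any of them. -/

import Mathlib

namespace HEC

/-- The parties `⟦N⟧ = {0,1,…,N}`, where `0` is the purifier. -/
abbrev Party (N : ℕ) := Fin (N + 1)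

/-- A collection of parties. -/
abbrev PSet (N : ℕ) := Finset (Party N)

/-- MI instances: unordered pairs of subsets of parties. -/
abbrev MI (N : ℕ) := Sym2 (PSet N)

/-- `m` is an MI instance, i.e. an unordered pair of disjoint nonempty subsets of `⟦N⟧`. -/
def IsMIInst {N : ℕ} (m : MI N) : Prop :=
  ∃ Y Z : PSet N, m = s(Y, Z) ∧ Y.Nonempty ∧ Z.Nonempty ∧ Disjoint Y Z

/-- The MI-poset order: `{Y,Z} ⪯ {Y',Z'}` iff (`Y ⊆ Y'` and `Z ⊆ Z'`) or
(`Y ⊆ Z'` and `Z ⊆ Y'`).  (The two cases are absorbed by the existential over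
representatives of the unordered pairs.) -/
def MIle {N : ℕ} (m m' : MI N) : Prop :=
  ∃ Y Z Y' Z' : PSet N, m = s(Y, Z) ∧ m' = s(Y', Z') ∧ Y ⊆ Y' ∧ Z ⊆ Z'

/-- An `N`-party entropy vector, extended to all subsets of `⟦N⟧` by the purification
convention: `S ∅ = 0` and `S Y = S (⟦N⟧ \ Y)` whenever `0 ∈ Y`. -/
structure EntropyVec (N : ℕ) where
  S : PSet N → ℝ
  S_empty : S ∅ = 0
  S_purify : ∀ Y : PSet N, (0 : Party N) ∈ Y → S Y = S (Finset.univ \ Y)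

/-- Mutual information `I(Y:Z) = S_Y + S_Z - S_{Y∪Z}`. -/
def EntropyVec.I {N : ℕ} (v : EntropyVec N) (Y Z : PSet N) : ℝ :=
  v.S Y + v.S Z - v.S (Y ∪ Z)

/-- Membership in the subadditivity cone: `I(Y:Z) ≥ 0` for every MI instance. -/
def EntropyVec.InSAC {N : ℕ} (v : EntropyVec N) : Prop :=
  ∀ Y Z : PSet N, Y.Nonempty → Z.Nonempty → Disjoint Y Z → 0 ≤ v.I Y Z

/-- The pattern of marginal independence of `v`: the MI instances vanishing on `v`. -/
def EntropyVec.PMI {N : ℕ} (v : EntropyVec N) : Set (MI N) :=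
  {m | ∃ Y Z : PSet N, m = s(Y, Z) ∧ Y.Nonempty ∧ Z.Nonempty ∧ Disjoint Y Z ∧ v.I Y Z = 0}

/-- `P` is a down-set in the MI-poset. -/
def IsMIDownSet {N : ℕ} (P : Set (MI N)) : Prop :=
  ∀ m m' : MI N, IsMIInst m → m' ∈ P → MIle m m' → m ∈ P

/-- `P` is a KC-PMI: the PMI of some entropy vector in the subadditivity cone,
which moreover is a down-set in the MI-poset. -/
def IsKCPMI {N : ℕ} (P : Set (MI N)) : Prop :=
  (∃ v : EntropyVec N, v.InSAC ∧ P = v.PMI) ∧ IsMIDownSet P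

/-- The β-set of `X`: all MI instances `{Y,Z}` with `Y ∪ Z = X`. -/
def betaSet {N : ℕ} (X : PSet N) : Set (MI N) :=
  {m | ∃ Y Z : PSet N, m = s(Y, Z) ∧ Y.Nonempty ∧ Z.Nonempty ∧ Disjoint Y Z ∧ Y ∪ Z = X}

/-- The antichain `A` of minimal elements of `P̄ = M_N ∖ P`. -/
def minimalMI {N : ℕ} (P : Set (MI N)) : Set (MI N) :=
  {m | IsMIInst m ∧ m ∉ P ∧ ∀ m' : MI N, IsMIInst m' → m' ∉ P → MIle m' m → m' = m}

/-- `β(X)` is positive: `β(X) ⊆ P̄`. -/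
def BPos {N : ℕ} (P : Set (MI N)) (X : PSet N) : Prop :=
  ∀ m ∈ betaSet X, m ∉ P

/-- `β(X)` is vanishing: `β(X) ⊆ P`. -/
def BVan {N : ℕ} (P : Set (MI N)) (X : PSet N) : Prop :=
  betaSet X ⊆ P

/-- `β(X)` is partial: it has elements both in `P` and in `P̄`. -/
def BPart {N : ℕ} (P : Set (MI N)) (X : PSet N) : Prop :=
  (∃ m ∈ betaSet X, m ∈ P) ∧ (∃ m ∈ betaSet X, m ∉ P)

/-- `β(X)` is essential: `β(X) ∩ A ≠ ∅`. -/
def BEss {N : ℕ} (P : Set (MI N)) (X : PSet N) : Prop :=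
  ∃ m ∈ betaSet X, m ∈ minimalMI P

/-- `β(X)` is completely essential: `β(X) ⊆ A`. -/
def BCEss {N : ℕ} (P : Set (MI N)) (X : PSet N) : Prop :=
  betaSet X ⊆ minimalMI P

/-- `β(X)` is non-essential: `β(X) ∩ A = ∅`. -/
def BNEss {N : ℕ} (P : Set (MI N)) (X : PSet N) : Prop :=
  ∀ m ∈ betaSet X, m ∉ minimalMI P

/-- `pos_<(Y)`: the proper subsystems `Z ⊊ Y` with `|Z| ≥ 2` and `β(Z)` positive. -/
def posBelow {N : ℕ} (P : Set (MI N)) (Y : PSet N) : Set (PSet N) :=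
  {Z | Z ⊂ Y ∧ 2 ≤ Z.card ∧ BPos P Z}

/-- `Max(pos_<(Y))`: the inclusion-maximal elements of `pos_<(Y)`. -/
def maxPosBelow {N : ℕ} (P : Set (MI N)) (Y : PSet N) : Set (PSet N) :=
  {Z | Z ∈ posBelow P Y ∧ ∀ Z' ∈ posBelow P Y, Z ⊆ Z' → Z = Z'}

/-- The MI instance `m = {Y,Z}` splits `X` if `X ∩ Y ≠ ∅` and `X ∩ Z ≠ ∅`. -/
def Splits {N : ℕ} (m : MI N) (X : PSet N) : Prop :=
  ∃ Y Z : PSet N, m = s(Y, Z) ∧ (X ∩ Y).Nonempty ∧ (X ∩ Z).Nonempty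

/-- The hyperedges of the correlation hypergraph `H_P`: one hyperedge `e_X` for each
`X ⊆ ⟦N⟧` (with `|X| ≥ 2`) whose β-set is positive.  Vertices `v_ℓ` are identified
with the parties `ℓ ∈ ⟦N⟧`, and hyperedges with the corresponding subsystems. -/
def Hedge {N : ℕ} (P : Set (MI N)) : Set (PSet N) :=
  {X | 2 ≤ X.card ∧ BPos P X}

/-- The hyperedges of the sub-hypergraph `H_Y`: the hyperedges `e_Z` with `Z ⊊ Y`. -/
def subEdges {N : ℕ} (P : Set (MI N)) (Y : PSet N) : Set (PSet N) :=
  {Z | Z ⊂ Y ∧ Z ∈ Hedge P}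

/-- One step in a hypergraph with hyperedge set `E`: `a` and `b` lie in a common
hyperedge. -/
def hStep {N : ℕ} (E : Set (PSet N)) (a b : Party N) : Prop :=
  ∃ e ∈ E, a ∈ e ∧ b ∈ e

/-- Connectivity of the hypergraph with vertex set `V` and hyperedge set `E`:
every two vertices are joined by a path (a one-vertex hypergraph is connected). -/
def hConn {N : ℕ} (V : PSet N) (E : Set (PSet N)) : Prop :=
  ∀ a ∈ V, ∀ b ∈ V, Relation.ReflTransGen (hStep E) a b

/-- The vertex set of the connected component of `a` in the hypergraph with
vertex set `V` and hyperedge set `E`. -/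
def hComp {N : ℕ} (V : PSet N) (E : Set (PSet N)) (a : Party N) : Set (Party N) :=
  {b | b ∈ V ∧ Relation.ReflTransGen (hStep E) a b}

/-- A clique of the line graph `L_{H_P}`: a set of hyperedges of `H_P` which are
pairwise adjacent (distinct hyperedges being adjacent iff they intersect). -/
def IsLineClique {N : ℕ} (P : Set (MI N)) (Q : Set (PSet N)) : Prop :=
  Q ⊆ Hedge P ∧ ∀ e ∈ Q, ∀ f ∈ Q, e ≠ f → (e ∩ f).Nonempty

/-- A max-clique of the line graph `L_{H_P}`: a (nonempty) clique which is maximal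
under inclusion. -/
def IsMaxClique {N : ℕ} (P : Set (MI N)) (Q : Set (PSet N)) : Prop :=
  Q.Nonempty ∧ IsLineClique P Q ∧ ∀ Q' : Set (PSet N), IsLineClique P Q' → Q ⊆ Q' → Q = Q'

/-- `Q^∩`: the intersection of the hyperedges in `Q`, viewed as sets of vertices. -/
def qInter {N : ℕ} (Q : Set (PSet N)) : Set (Party N) :=
  {ℓ | ∀ e ∈ Q, ℓ ∈ e}

attribute [local instance] Classical.propDecidable

/-- The sum `Σ_{Z ∈ Γ(Y)} S_Z`, where the partition `Γ(Y)` of `Y` consists of the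
elements of `Max(pos_<(Y))` together with the singletons of the parties of `Y` not
contained in any of them. -/
noncomputable def gammaSum {N : ℕ} (P : Set (MI N)) (v : EntropyVec N) (Y : PSet N) : ℝ :=
  (∑ Z ∈ (Set.toFinite (maxPosBelow P Y)).toFinset, v.S Z) +
  ∑ ℓ ∈ Y.filter (fun ℓ => ∀ Z ∈ maxPosBelow P Y, ℓ ∉ Z), v.S {ℓ}

section Aux

variable {N : ℕ} {P : Set (MI N)}

lemma I_comm (w : EntropyVec N) (A B : PSet N) : w.I A B = w.I B A := by
  unfold EntropyVec.I; rw [Finset.union_comm]; ring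

lemma mem_P_iff {w : EntropyVec N} (hPw : P = w.PMI) {A B : PSet N}
    (hA : A.Nonempty) (hB : B.Nonempty) (hAB : Disjoint A B) :
    s(A, B) ∈ P ↔ w.I A B = 0 := by
  subst hPw
  constructor
  · rintro ⟨Y, Z, hEq, _, _, _, hI⟩
    rcases Sym2.eq_iff.mp hEq with ⟨rfl, rfl⟩ | ⟨rfl, rfl⟩
    · exact hI
    · rw [I_comm]; exact hI
  · intro h
    exact ⟨A, B, rfl, hA, hB, hAB, h⟩

lemma downP (hD : IsMIDownSet P) {A B C D : PSet N} (hCD : s(C, D) ∈ P)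
    (hA : A.Nonempty) (hB : B.Nonempty) (hAC : A ⊆ C) (hBD : B ⊆ D)
    (hCDd : Disjoint C D) : s(A, B) ∈ P :=
  hD _ _ ⟨A, B, rfl, hA, hB, Disjoint.mono hAC hBD hCDd⟩ hCD ⟨A, B, C, D, rfl, rfl, hAC, hBD⟩

lemma notP_of_split (hD : IsMIDownSet P) {X A B : PSet N} (hX : BPos P X)
    (hXA : (X ∩ A).Nonempty) (hXB : (X ∩ B).Nonempty) (hsub : X ⊆ A ∪ B)
    (hAB : Disjoint A B) (hmem : s(A, B) ∈ P) : False := by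
  have hunion : (X ∩ A) ∪ (X ∩ B) = X := by
    rw [← Finset.inter_union_distrib_left]
    exact Finset.inter_eq_left.mpr hsub
  have hdisj : Disjoint (X ∩ A) (X ∩ B) :=
    Disjoint.mono Finset.inter_subset_right Finset.inter_subset_right hAB
  exact hX s(X ∩ A, X ∩ B) ⟨_, _, rfl, hXA, hXB, hdisj, hunion⟩
    (downP hD hmem hXA hXB Finset.inter_subset_right Finset.inter_subset_right hAB)

lemma BPos_union (hD : IsMIDownSet P) {X1 X2 : PSet N} (h1 : BPos P X1)
    (h2 : BPos P X2) (hI : (X1 ∩ X2).Nonempty) : BPos P (X1 ∪ X2) := by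
  rintro m ⟨A, B, rfl, hA, hB, hAB, hU⟩ hmem
  have hX1 : X1 ⊆ A ∪ B := by rw [hU]; exact Finset.subset_union_left
  have hX2 : X2 ⊆ A ∪ B := by rw [hU]; exact Finset.subset_union_right
  by_cases hcase : (X1 ∩ A).Nonempty ∧ (X1 ∩ B).Nonempty
  · exact notP_of_split hD h1 hcase.1 hcase.2 hX1 hAB hmem
  · rw [not_and_or] at hcase
    have key : (X2 ∩ A).Nonempty ∧ (X2 ∩ B).Nonempty := by
      rcases hcase with hc | hc
      · have hX1B : X1 ⊆ B := by
          intro x hx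
          rcases Finset.mem_union.mp (hX1 hx) with h | h
          · exact absurd ⟨x, Finset.mem_inter.mpr ⟨hx, h⟩⟩ hc
          · exact h
        constructor
        · obtain ⟨a, ha⟩ := hA
          have haU : a ∈ X1 ∪ X2 := by rw [← hU]; exact Finset.mem_union_left _ ha
          rcases Finset.mem_union.mp haU with h | h
          · exact absurd (hX1B h) (Finset.disjoint_left.mp hAB ha)
          · exact ⟨a, Finset.mem_inter.mpr ⟨h, ha⟩⟩
        · obtain ⟨x, hx⟩ := hI
          obtain ⟨hx1, hx2⟩ := Finset.mem_inter.mp hx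
          exact ⟨x, Finset.mem_inter.mpr ⟨hx2, hX1B hx1⟩⟩
      · have hX1A : X1 ⊆ A := by
          intro x hx
          rcases Finset.mem_union.mp (hX1 hx) with h | h
          · exact h
          · exact absurd ⟨x, Finset.mem_inter.mpr ⟨hx, h⟩⟩ hc
        constructor
        · obtain ⟨x, hx⟩ := hI
          obtain ⟨hx1, hx2⟩ := Finset.mem_inter.mp hx
          exact ⟨x, Finset.mem_inter.mpr ⟨hx2, hX1A hx1⟩⟩
        · obtain ⟨b, hb⟩ := hB
          have hbU : b ∈ X1 ∪ X2 := by rw [← hU]; exact Finset.mem_union_right _ hb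
          rcases Finset.mem_union.mp hbU with h | h
          · exact absurd (hX1A h) (Finset.disjoint_right.mp hAB hb)
          · exact ⟨b, Finset.mem_inter.mpr ⟨h, hb⟩⟩
    exact notP_of_split hD h2 key.1 key.2 hX2 hAB hmem

lemma maxPos_disjoint (hD : IsMIDownSet P) {Y : PSet N} (hY : ¬ BPos P Y)
    {W W' : PSet N} (hW : W ∈ maxPosBelow P Y) (hW' : W' ∈ maxPosBelow P Y)
    (hne : W ≠ W') : Disjoint W W' := by
  by_contra hcon
  rw [Finset.not_disjoint_iff] at hcon
  obtain ⟨a, haW, haW'⟩ := hcon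
  have hpos : BPos P (W ∪ W') :=
    BPos_union hD hW.1.2.2 hW'.1.2.2 ⟨a, Finset.mem_inter.mpr ⟨haW, haW'⟩⟩
  have hsub : W ∪ W' ⊆ Y := Finset.union_subset hW.1.1.subset hW'.1.1.subset
  have hne2 : W ∪ W' ≠ Y := fun h => hY (h ▸ hpos)
  have hmem : W ∪ W' ∈ posBelow P Y :=
    ⟨Finset.ssubset_iff_subset_ne.mpr ⟨hsub, hne2⟩,
      le_trans hW.1.2.1 (Finset.card_le_card Finset.subset_union_left), hpos⟩
  have h1 := hW.2 _ hmem Finset.subset_union_left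
  have h2 := hW'.2 _ hmem Finset.subset_union_right
  exact hne (h1.trans h2.symm)

lemma exists_maxPos {Y X : PSet N} (hX : X ∈ posBelow P Y) :
    ∃ W ∈ maxPosBelow P Y, X ⊆ W := by
  classical
  set T : Finset (PSet N) := Y.powerset.filter (fun Z => X ⊆ Z ∧ Z ∈ posBelow P Y) with hT
  have hXT : X ∈ T :=
    Finset.mem_filter.mpr ⟨Finset.mem_powerset.mpr hX.1.subset, Finset.Subset.refl X, hX⟩
  obtain ⟨W, hWT, hmax⟩ : ∃ W ∈ T, ∀ x ∈ T, ¬ W < x := by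
    obtain ⟨W, hW⟩ := Finset.exists_maximal (s := T) ⟨X, hXT⟩
    exact ⟨W, hW.1, fun x hx hlt => hlt.ne (le_antisymm hlt.le (hW.2 hx hlt.le))⟩
  obtain ⟨hWp, hXW, hWpos⟩ := Finset.mem_filter.mp hWT
  refine ⟨W, ⟨hWpos, ?_⟩, hXW⟩
  intro Z' hZ' hWZ'
  by_contra hne
  exact hmax Z'
    (Finset.mem_filter.mpr ⟨Finset.mem_powerset.mpr hZ'.1.subset, hXW.trans hWZ', hZ'⟩)
    (Finset.ssubset_iff_subset_ne.mpr ⟨hWZ', hne⟩)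

end Aux

section Aux2

variable {N : ℕ} {P : Set (MI N)}

lemma exists_pos_split {w : EntropyVec N} (hPw : P = w.PMI) (hD : IsMIDownSet P) :
    ∀ n : ℕ, ∀ A B : PSet N, (A ∪ B).card ≤ n → A.Nonempty → B.Nonempty → Disjoint A B →
      s(A, B) ∉ P →
      ∃ X : PSet N, X ⊆ A ∪ B ∧ BPos P X ∧ (X ∩ A).Nonempty ∧ (X ∩ B).Nonempty := by
  intro n
  induction n with
  | zero =>
    intro A B hcard hA _ _ _
    exfalso
    have h0 : A ∪ B = ∅ := Finset.card_eq_zero.mp (Nat.le_zero.mp hcard)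
    obtain ⟨a, ha⟩ := hA
    have : a ∈ A ∪ B := Finset.mem_union_left _ ha
    rw [h0] at this
    exact absurd this (Finset.notMem_empty a)
  | succ n ih =>
    intro A B hcard hA hB hAB hnP
    by_cases hpos : BPos P (A ∪ B)
    · refine ⟨A ∪ B, Finset.Subset.refl _, hpos, ?_, ?_⟩
      · obtain ⟨a, ha⟩ := hA
        exact ⟨a, Finset.mem_inter.mpr ⟨Finset.mem_union_left _ ha, ha⟩⟩
      · obtain ⟨b, hb⟩ := hB
        exact ⟨b, Finset.mem_inter.mpr ⟨Finset.mem_union_right _ hb, hb⟩⟩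
    · simp only [BPos, not_forall] at hpos
      push_neg at hpos
      obtain ⟨m, hmβ, hmP⟩ := hpos
      obtain ⟨C, D, rfl, hC, hDn, hCDd, hCDu⟩ := hmβ
      have hCsub : C ⊆ A ∪ B := by rw [← hCDu]; exact Finset.subset_union_left
      have hDsub : D ⊆ A ∪ B := by rw [← hCDu]; exact Finset.subset_union_right
      have hCss : C ⊂ A ∪ B := by
        refine Finset.ssubset_iff_subset_ne.mpr ⟨hCsub, ?_⟩
        intro h
        obtain ⟨d, hd⟩ := hDn
        have hdC : d ∈ C := by rw [h]; exact hDsub hd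
        exact Finset.disjoint_left.mp hCDd hdC hd
      have hDss : D ⊂ A ∪ B := by
        refine Finset.ssubset_iff_subset_ne.mpr ⟨hDsub, ?_⟩
        intro h
        obtain ⟨c, hc⟩ := hC
        have hcD : c ∈ D := by rw [h]; exact hCsub hc
        exact Finset.disjoint_left.mp hCDd hc hcD
      have hCcard : C.card ≤ n := Nat.lt_succ_iff.mp (lt_of_lt_of_le (Finset.card_lt_card hCss) hcard)
      have hDcard : D.card ≤ n := Nat.lt_succ_iff.mp (lt_of_lt_of_le (Finset.card_lt_card hDss) hcard)
      have hCeq : (A ∩ C) ∪ (B ∩ C) = C := by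
        rw [Finset.inter_comm A C, Finset.inter_comm B C, ← Finset.inter_union_distrib_left]
        exact Finset.inter_eq_left.mpr hCsub
      have hDeq : (A ∩ D) ∪ (B ∩ D) = D := by
        rw [Finset.inter_comm A D, Finset.inter_comm B D, ← Finset.inter_union_distrib_left]
        exact Finset.inter_eq_left.mpr hDsub
      have hAeq : (A ∩ C) ∪ (A ∩ D) = A := by
        rw [← Finset.inter_union_distrib_left, hCDu]
        exact Finset.inter_eq_left.mpr Finset.subset_union_left
      have hBeq : (B ∩ C) ∪ (B ∩ D) = B := by
        rw [← Finset.inter_union_distrib_left, hCDu]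
        exact Finset.inter_eq_left.mpr Finset.subset_union_right
      by_cases hSideC : (A ∩ C).Nonempty ∧ (B ∩ C).Nonempty ∧ s(A ∩ C, B ∩ C) ∉ P
      · obtain ⟨ha1, hb1, hnp1⟩ := hSideC
        have hd1 : Disjoint (A ∩ C) (B ∩ C) :=
          Disjoint.mono Finset.inter_subset_left Finset.inter_subset_left hAB
        have hcard1 : ((A ∩ C) ∪ (B ∩ C)).card ≤ n := by rw [hCeq]; exact hCcard
        obtain ⟨X, hXsub, hXpos, hXa, hXb⟩ := ih _ _ hcard1 ha1 hb1 hd1 hnp1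
        refine ⟨X, hXsub.trans (by rw [hCeq]; exact hCsub), hXpos, ?_, ?_⟩
        · obtain ⟨x, hx⟩ := hXa
          obtain ⟨hx1, hx2⟩ := Finset.mem_inter.mp hx
          exact ⟨x, Finset.mem_inter.mpr ⟨hx1, (Finset.mem_inter.mp hx2).1⟩⟩
        · obtain ⟨x, hx⟩ := hXb
          obtain ⟨hx1, hx2⟩ := Finset.mem_inter.mp hx
          exact ⟨x, Finset.mem_inter.mpr ⟨hx1, (Finset.mem_inter.mp hx2).1⟩⟩
      · by_cases hSideD : (A ∩ D).Nonempty ∧ (B ∩ D).Nonempty ∧ s(A ∩ D, B ∩ D) ∉ P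
        · obtain ⟨ha2, hb2, hnp2⟩ := hSideD
          have hd2 : Disjoint (A ∩ D) (B ∩ D) :=
            Disjoint.mono Finset.inter_subset_left Finset.inter_subset_left hAB
          have hcard2 : ((A ∩ D) ∪ (B ∩ D)).card ≤ n := by rw [hDeq]; exact hDcard
          obtain ⟨X, hXsub, hXpos, hXa, hXb⟩ := ih _ _ hcard2 ha2 hb2 hd2 hnp2
          refine ⟨X, hXsub.trans (by rw [hDeq]; exact hDsub), hXpos, ?_, ?_⟩
          · obtain ⟨x, hx⟩ := hXa
            obtain ⟨hx1, hx2⟩ := Finset.mem_inter.mp hx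
            exact ⟨x, Finset.mem_inter.mpr ⟨hx1, (Finset.mem_inter.mp hx2).1⟩⟩
          · obtain ⟨x, hx⟩ := hXb
            obtain ⟨hx1, hx2⟩ := Finset.mem_inter.mp hx
            exact ⟨x, Finset.mem_inter.mpr ⟨hx1, (Finset.mem_inter.mp hx2).1⟩⟩
        · exfalso
          apply hnP
          rw [mem_P_iff hPw hA hB hAB]
          have hcross : ∀ X1 X2 : PSet N, X1 ⊆ C → X2 ⊆ D → X1.Nonempty → X2.Nonempty →
              w.S (X1 ∪ X2) = w.S X1 + w.S X2 := by
            intro X1 X2 h1 h2 hn1 hn2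
            have hd : Disjoint X1 X2 := Disjoint.mono h1 h2 hCDd
            have hi := (mem_P_iff hPw hn1 hn2 hd).mp (downP hD hmP hn1 hn2 h1 h2 hCDd)
            unfold EntropyVec.I at hi; linarith
          have hSC : w.S C = w.S (A ∩ C) + w.S (B ∩ C) := by
            rcases Finset.eq_empty_or_nonempty (A ∩ C) with h | ha1
            · rw [h] at hCeq ⊢
              rw [Finset.empty_union] at hCeq
              rw [hCeq, w.S_empty]; ring
            · rcases Finset.eq_empty_or_nonempty (B ∩ C) with h | hb1
              · rw [h] at hCeq ⊢
                rw [Finset.union_empty] at hCeq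
                rw [hCeq, w.S_empty]; ring
              · have hmem2 : s(A ∩ C, B ∩ C) ∈ P := by
                  by_contra hc
                  exact hSideC ⟨ha1, hb1, hc⟩
                have hi := (mem_P_iff hPw ha1 hb1
                  (Disjoint.mono Finset.inter_subset_left Finset.inter_subset_left hAB)).mp hmem2
                unfold EntropyVec.I at hi
                have h3 : w.S (A ∩ C ∪ B ∩ C) = w.S (A ∩ C) + w.S (B ∩ C) := by linarith
                rw [hCeq] at h3; exact h3
          have hSD : w.S D = w.S (A ∩ D) + w.S (B ∩ D) := by
            rcases Finset.eq_empty_or_nonempty (A ∩ D) with h | ha2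
            · rw [h] at hDeq ⊢
              rw [Finset.empty_union] at hDeq
              rw [hDeq, w.S_empty]; ring
            · rcases Finset.eq_empty_or_nonempty (B ∩ D) with h | hb2
              · rw [h] at hDeq ⊢
                rw [Finset.union_empty] at hDeq
                rw [hDeq, w.S_empty]; ring
              · have hmem2 : s(A ∩ D, B ∩ D) ∈ P := by
                  by_contra hc
                  exact hSideD ⟨ha2, hb2, hc⟩
                have hi := (mem_P_iff hPw ha2 hb2
                  (Disjoint.mono Finset.inter_subset_left Finset.inter_subset_left hAB)).mp hmem2
                unfold EntropyVec.I at hi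
                have h3 : w.S (A ∩ D ∪ B ∩ D) = w.S (A ∩ D) + w.S (B ∩ D) := by linarith
                rw [hDeq] at h3; exact h3
          have hSA : w.S A = w.S (A ∩ C) + w.S (A ∩ D) := by
            rcases Finset.eq_empty_or_nonempty (A ∩ C) with h | ha1
            · rw [h] at hAeq ⊢
              rw [Finset.empty_union] at hAeq
              rw [hAeq, w.S_empty]; ring
            · rcases Finset.eq_empty_or_nonempty (A ∩ D) with h | ha2
              · rw [h] at hAeq ⊢
                rw [Finset.union_empty] at hAeq
                rw [hAeq, w.S_empty]; ring
              · have h3 := hcross (A ∩ C) (A ∩ D) Finset.inter_subset_right Finset.inter_subset_right ha1 ha2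
                rw [hAeq] at h3; exact h3
          have hSB : w.S B = w.S (B ∩ C) + w.S (B ∩ D) := by
            rcases Finset.eq_empty_or_nonempty (B ∩ C) with h | hb1
            · rw [h] at hBeq ⊢
              rw [Finset.empty_union] at hBeq
              rw [hBeq, w.S_empty]; ring
            · rcases Finset.eq_empty_or_nonempty (B ∩ D) with h | hb2
              · rw [h] at hBeq ⊢
                rw [Finset.union_empty] at hBeq
                rw [hBeq, w.S_empty]; ring
              · have h3 := hcross (B ∩ C) (B ∩ D) Finset.inter_subset_right Finset.inter_subset_right hb1 hb2
                rw [hBeq] at h3; exact h3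
          have hSAB : w.S (A ∪ B) = w.S C + w.S D := by
            rw [← hCDu]
            exact hcross C D (Finset.Subset.refl C) (Finset.Subset.refl D) hC hDn
          unfold EntropyVec.I
          linarith

end Aux2

section Aux3

variable {N : ℕ}

/-- The finset of maximal positive proper subsystems of `Y`. -/
noncomputable def maxF (P : Set (MI N)) (Y : PSet N) : Finset (PSet N) :=
  (Set.toFinite (maxPosBelow P Y)).toFinset

/-- The parties of `Y` not covered by any maximal positive proper subsystem. -/
noncomputable def uncovF (P : Set (MI N)) (Y : PSet N) : Finset (Party N) :=
  Y.filter (fun ℓ => ∀ Z ∈ maxPosBelow P Y, ℓ ∉ Z)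

/-- The parts of the partition `Γ(Y)`. -/
noncomputable def partsF (P : Set (MI N)) (Y : PSet N) : Finset (PSet N) :=
  maxF P Y ∪ (uncovF P Y).image (fun ℓ => ({ℓ} : PSet N))

variable {P : Set (MI N)}

lemma mem_maxF {Y W : PSet N} : W ∈ maxF P Y ↔ W ∈ maxPosBelow P Y :=
  Set.Finite.mem_toFinset _

lemma gammaSum_eq (P : Set (MI N)) (v : EntropyVec N) (Y : PSet N) :
    gammaSum P v Y = (∑ Z ∈ maxF P Y, v.S Z) + ∑ ℓ ∈ uncovF P Y, v.S {ℓ} := rfl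

lemma parts_props {Y W : PSet N} (hW : W ∈ partsF P Y) : W.Nonempty ∧ W ⊆ Y := by
  rcases Finset.mem_union.mp hW with h | h
  · have h' := mem_maxF.mp h
    exact ⟨Finset.card_pos.mp (Nat.lt_of_lt_of_le (by norm_num) h'.1.2.1), h'.1.1.subset⟩
  · obtain ⟨ℓ, hℓ, rfl⟩ := Finset.mem_image.mp h
    exact ⟨Finset.singleton_nonempty ℓ,
      Finset.singleton_subset_iff.mpr (Finset.mem_filter.mp hℓ).1⟩

lemma parts_disjoint (hD : IsMIDownSet P) {Y : PSet N} (hnp : ¬ BPos P Y)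
    {W W' : PSet N} (hW : W ∈ partsF P Y) (hW' : W' ∈ partsF P Y) (hne : W ≠ W') :
    Disjoint W W' := by
  rcases Finset.mem_union.mp hW with h | h <;> rcases Finset.mem_union.mp hW' with h' | h'
  · exact maxPos_disjoint hD hnp (mem_maxF.mp h) (mem_maxF.mp h') hne
  · obtain ⟨ℓ, hℓ, rfl⟩ := Finset.mem_image.mp h'
    exact Finset.disjoint_singleton_right.mpr ((Finset.mem_filter.mp hℓ).2 W (mem_maxF.mp h))
  · obtain ⟨ℓ, hℓ, rfl⟩ := Finset.mem_image.mp h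
    exact Finset.disjoint_singleton_left.mpr ((Finset.mem_filter.mp hℓ).2 W' (mem_maxF.mp h'))
  · obtain ⟨ℓ, hℓ, rfl⟩ := Finset.mem_image.mp h
    obtain ⟨ℓ', hℓ', rfl⟩ := Finset.mem_image.mp h'
    refine Finset.disjoint_singleton_left.mpr ?_
    rw [Finset.mem_singleton]
    intro hc
    exact hne (by rw [hc])

lemma parts_cover {Y : PSet N} {ℓ : Party N} (hℓ : ℓ ∈ Y) :
    ∃ W ∈ partsF P Y, ℓ ∈ W := by
  by_cases h : ∀ Z ∈ maxPosBelow P Y, ℓ ∉ Z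
  · exact ⟨{ℓ}, Finset.mem_union_right _
      (Finset.mem_image_of_mem _ (Finset.mem_filter.mpr ⟨hℓ, h⟩)), Finset.mem_singleton_self ℓ⟩
  · push_neg at h
    obtain ⟨Z, hZ, hℓZ⟩ := h
    exact ⟨Z, Finset.mem_union_left _ (mem_maxF.mpr hZ), hℓZ⟩

lemma parts_sup {Y : PSet N} : (partsF P Y).sup id = Y := by
  apply Finset.Subset.antisymm
  · exact Finset.sup_le fun W hW => (parts_props hW).2
  · intro ℓ hℓ
    obtain ⟨W, hW, hℓW⟩ := parts_cover hℓ
    exact (Finset.le_sup (f := id) hW) hℓW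

lemma mem_sup_parts {G : Finset (PSet N)} {a : Party N} :
    a ∈ G.sup id ↔ ∃ W ∈ G, a ∈ W := by
  simp [Finset.mem_sup]

lemma parts_pair_mem {w : EntropyVec N} (hPw : P = w.PMI) (hD : IsMIDownSet P)
    {Y : PSet N} (hnp : ¬ BPos P Y)
    {G1 G2 : Finset (PSet N)} (h1 : G1 ⊆ partsF P Y) (h2 : G2 ⊆ partsF P Y)
    (hd : Disjoint G1 G2) (hn1 : G1.Nonempty) (hn2 : G2.Nonempty) :
    s(G1.sup id, G2.sup id) ∈ P := by
  set A := G1.sup id with hAdef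
  set B := G2.sup id with hBdef
  have hAn : A.Nonempty := by
    obtain ⟨W, hW⟩ := hn1
    obtain ⟨a, ha⟩ := (parts_props (h1 hW)).1
    exact ⟨a, mem_sup_parts.mpr ⟨W, hW, ha⟩⟩
  have hBn : B.Nonempty := by
    obtain ⟨W, hW⟩ := hn2
    obtain ⟨a, ha⟩ := (parts_props (h2 hW)).1
    exact ⟨a, mem_sup_parts.mpr ⟨W, hW, ha⟩⟩
  have hABd : Disjoint A B := by
    rw [Finset.disjoint_left]
    intro a haA haB
    obtain ⟨W1, hW1, ha1⟩ := mem_sup_parts.mp haA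
    obtain ⟨W2, hW2, ha2⟩ := mem_sup_parts.mp haB
    have hne : W1 ≠ W2 := fun h => Finset.disjoint_left.mp hd hW1 (h ▸ hW2)
    exact Finset.disjoint_left.mp (parts_disjoint hD hnp (h1 hW1) (h2 hW2) hne) ha1 ha2
  by_contra hnot
  obtain ⟨X, hXsub, hXpos, hXA, hXB⟩ :=
    exists_pos_split hPw hD (A ∪ B).card A B (le_refl _) hAn hBn hABd hnot
  have hABY : A ∪ B ⊆ Y := by
    apply Finset.union_subset
    · exact Finset.sup_le fun W hW => (parts_props (h1 hW)).2
    · exact Finset.sup_le fun W hW => (parts_props (h2 hW)).2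
  have hXY : X ⊆ Y := hXsub.trans hABY
  have hXcard : 2 ≤ X.card := by
    rw [show (2 : ℕ) = 1 + 1 from rfl]
    rw [Nat.add_one_le_iff, Finset.one_lt_card]
    obtain ⟨a, ha⟩ := hXA
    obtain ⟨b, hb⟩ := hXB
    obtain ⟨haX, haA⟩ := Finset.mem_inter.mp ha
    obtain ⟨hbX, hbB⟩ := Finset.mem_inter.mp hb
    exact ⟨a, haX, b, hbX, fun h => Finset.disjoint_left.mp hABd haA (h ▸ hbB)⟩
  have hXne : X ≠ Y := fun h => hnp (h ▸ hXpos)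
  have hXmem : X ∈ posBelow P Y :=
    ⟨Finset.ssubset_iff_subset_ne.mpr ⟨hXY, hXne⟩, hXcard, hXpos⟩
  obtain ⟨W, hWmax, hXW⟩ := exists_maxPos hXmem
  have hWparts : W ∈ partsF P Y := Finset.mem_union_left _ (mem_maxF.mpr hWmax)
  have hWG1 : W ∈ G1 := by
    obtain ⟨a, ha⟩ := hXA
    obtain ⟨haX, haA⟩ := Finset.mem_inter.mp ha
    obtain ⟨W1, hW1, ha1⟩ := mem_sup_parts.mp haA
    have : W = W1 := by
      by_contra hne
      exact Finset.disjoint_left.mp (parts_disjoint hD hnp hWparts (h1 hW1) hne) (hXW haX) ha1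
    exact this ▸ hW1
  have hWG2 : W ∈ G2 := by
    obtain ⟨a, ha⟩ := hXB
    obtain ⟨haX, haA⟩ := Finset.mem_inter.mp ha
    obtain ⟨W2, hW2, ha2⟩ := mem_sup_parts.mp haA
    have : W = W2 := by
      by_contra hne
      exact Finset.disjoint_left.mp (parts_disjoint hD hnp hWparts (h2 hW2) hne) (hXW haX) ha2
    exact this ▸ hW2
  exact Finset.disjoint_left.mp hd hWG1 hWG2

lemma tele_sum (v : EntropyVec N)
    (ha : ∀ Y Z : PSet N, Y.Nonempty → Z.Nonempty → Disjoint Y Z → s(Y, Z) ∈ P → v.I Y Z = 0)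
    {w : EntropyVec N} (hPw : P = w.PMI) (hD : IsMIDownSet P)
    {Y : PSet N} (hnp : ¬ BPos P Y) :
    ∀ G : Finset (PSet N), G ⊆ partsF P Y → v.S (G.sup id) = ∑ W ∈ G, v.S W := by
  intro G
  induction G using Finset.strongInduction with
  | _ G ih =>
    intro hG
    rcases Finset.eq_empty_or_nonempty G with rfl | ⟨W, hW⟩
    · simp [v.S_empty]
    rcases Finset.eq_empty_or_nonempty (G.erase W) with he | hne
    · have hGW : G = {W} := by
        apply Finset.Subset.antisymm
        · intro x hx
          rw [Finset.mem_singleton]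
          by_contra hxW
          have : x ∈ G.erase W := Finset.mem_erase.mpr ⟨hxW, hx⟩
          rw [he] at this
          exact absurd this (Finset.notMem_empty x)
        · exact Finset.singleton_subset_iff.mpr hW
      rw [hGW]
      simp
    · have hsub1 : ({W} : Finset (PSet N)) ⊆ partsF P Y :=
        Finset.singleton_subset_iff.mpr (hG hW)
      have hsub2 : G.erase W ⊆ partsF P Y := (Finset.erase_subset W G).trans hG
      have hdG : Disjoint ({W} : Finset (PSet N)) (G.erase W) := by
        rw [Finset.disjoint_singleton_left]
        exact Finset.notMem_erase W G
      have hmem := parts_pair_mem hPw hD hnp hsub1 hsub2 hdG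
        ⟨W, Finset.mem_singleton_self W⟩ hne
      rw [Finset.sup_singleton] at hmem
      have hWn : W.Nonempty := (parts_props (hG hW)).1
      have hEn : ((G.erase W).sup id).Nonempty := by
        obtain ⟨W', hW'⟩ := hne
        obtain ⟨a, ha⟩ := (parts_props (hsub2 hW')).1
        exact ⟨a, mem_sup_parts.mpr ⟨W', hW', ha⟩⟩
      have hdisj : Disjoint W ((G.erase W).sup id) := by
        rw [Finset.disjoint_left]
        intro a haW haE
        obtain ⟨W', hW', ha'⟩ := mem_sup_parts.mp haE
        have hne' : W ≠ W' := fun h => (Finset.mem_erase.mp hW').1 h.symm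
        exact Finset.disjoint_left.mp
          (parts_disjoint hD hnp (hG hW) (hsub2 hW') hne') haW ha'
      have hI := ha _ _ hWn hEn hdisj hmem
      unfold EntropyVec.I at hI
      have hsupeq : W ∪ (G.erase W).sup id = G.sup id := by
        conv_rhs => rw [← Finset.insert_erase hW]
        rw [Finset.sup_insert]
        rfl
      rw [← Finset.add_sum_erase G _ hW,
        ← ih (G.erase W) (Finset.erase_ssubset hW) hsub2, ← hsupeq]
      linarith

lemma dir_ab {w : EntropyVec N} (hPw : P = w.PMI) (hD : IsMIDownSet P)
    (v : EntropyVec N)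
    (ha : ∀ Y Z : PSet N, Y.Nonempty → Z.Nonempty → Disjoint Y Z → s(Y, Z) ∈ P → v.I Y Z = 0)
    {Y : PSet N} (hnp : ¬ BPos P Y) : v.S Y = gammaSum P v Y := by
  have htele := tele_sum v ha hPw hD hnp (partsF P Y) (Finset.Subset.refl _)
  rw [parts_sup] at htele
  rw [htele, gammaSum_eq]
  unfold partsF
  rw [Finset.sum_union, Finset.sum_image]
  · intro x _ y _ hxy
    exact Finset.singleton_inj.mp hxy
  · rw [Finset.disjoint_left]
    intro W hWm hWi
    obtain ⟨ℓ, _, rfl⟩ := Finset.mem_image.mp hWi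
    have h2 := (mem_maxF.mp hWm).1.2.1
    rw [Finset.card_singleton] at h2
    omega

end Aux3

section Aux4

variable {N : ℕ} {P : Set (MI N)}

lemma posU_sub (hD : IsMIDownSet P) {Y Z W : PSet N} (hYZ : s(Y, Z) ∈ P)
    (hYZd : Disjoint Y Z) (hW : BPos P W) (hWsub : W ⊆ Y ∪ Z) : W ⊆ Y ∨ W ⊆ Z := by
  by_cases hWY : (W ∩ Y).Nonempty
  · left
    by_contra hc
    obtain ⟨x, hxW, hxY⟩ := Finset.not_subset.mp hc
    have hxZ : x ∈ Z := by
      rcases Finset.mem_union.mp (hWsub hxW) with h | h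
      · exact absurd h hxY
      · exact h
    exact notP_of_split hD hW hWY ⟨x, Finset.mem_inter.mpr ⟨hxW, hxZ⟩⟩ hWsub hYZd hYZ
  · right
    intro x hx
    rcases Finset.mem_union.mp (hWsub hx) with h | h
    · exact absurd ⟨x, Finset.mem_inter.mpr ⟨hx, h⟩⟩ hWY
    · exact h

lemma Y_ssubset_union {Y Z : PSet N} (hZn : Z.Nonempty) (hYZd : Disjoint Y Z) :
    Y ⊂ Y ∪ Z := by
  refine Finset.ssubset_iff_subset_ne.mpr ⟨Finset.subset_union_left, ?_⟩
  intro h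
  obtain ⟨z, hz⟩ := hZn
  have : z ∈ Y := by rw [h]; exact Finset.mem_union_right _ hz
  exact Finset.disjoint_left.mp hYZd this hz

lemma maxPos_self (hD : IsMIDownSet P) {Y Z : PSet N} (hYZ : s(Y, Z) ∈ P)
    (hYn : Y.Nonempty) (hZn : Z.Nonempty) (hYZd : Disjoint Y Z)
    (hpY : BPos P Y) (h2Y : 2 ≤ Y.card) : Y ∈ maxPosBelow P (Y ∪ Z) := by
  refine ⟨⟨Y_ssubset_union hZn hYZd, h2Y, hpY⟩, ?_⟩
  intro Z' hZ' hYZ'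
  rcases posU_sub hD hYZ hYZd hZ'.2.2 hZ'.1.subset with h | h
  · exact Finset.Subset.antisymm hYZ' h
  · exfalso
    obtain ⟨y, hy⟩ := hYn
    exact Finset.disjoint_left.mp hYZd hy (h (hYZ' hy))

lemma maxPos_restrict (hD : IsMIDownSet P) {Y Z : PSet N} (hYZ : s(Y, Z) ∈ P)
    (hYn : Y.Nonempty) (hZn : Z.Nonempty) (hYZd : Disjoint Y Z)
    (hnpY : ¬ BPos P Y) {W : PSet N} :
    (W ∈ maxPosBelow P (Y ∪ Z) ∧ W ⊆ Y) ↔ W ∈ maxPosBelow P Y := by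
  constructor
  · rintro ⟨hW, hWY⟩
    have hWneY : W ≠ Y := fun h => hnpY (h ▸ hW.1.2.2)
    refine ⟨⟨Finset.ssubset_iff_subset_ne.mpr ⟨hWY, hWneY⟩, hW.1.2.1, hW.1.2.2⟩, ?_⟩
    intro Z' hZ' hWZ'
    have hZ'U : Z' ∈ posBelow P (Y ∪ Z) :=
      ⟨hZ'.1.trans_subset Finset.subset_union_left, hZ'.2.1, hZ'.2.2⟩
    exact hW.2 Z' hZ'U hWZ'
  · intro hW
    have hWn : W.Nonempty := Finset.card_pos.mp (Nat.lt_of_lt_of_le (by norm_num) hW.1.2.1)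
    refine ⟨⟨⟨hW.1.1.trans_subset Finset.subset_union_left, hW.1.2.1, hW.1.2.2⟩, ?_⟩, hW.1.1.subset⟩
    intro W' hW' hWW'
    rcases posU_sub hD hYZ hYZd hW'.2.2 hW'.1.subset with h | h
    · have hW'neY : W' ≠ Y := fun hc => hnpY (hc ▸ hW'.2.2)
      exact hW.2 W' ⟨Finset.ssubset_iff_subset_ne.mpr ⟨h, hW'neY⟩, hW'.2.1, hW'.2.2⟩ hWW'
    · exfalso
      obtain ⟨x, hx⟩ := hWn
      exact Finset.disjoint_left.mp hYZd (hW.1.1.subset hx) (h (hWW' hx))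

lemma side_sum {w : EntropyVec N} (hPw : P = w.PMI) (hD : IsMIDownSet P)
    (v : EntropyVec N)
    (hb : ∀ Y : PSet N, 2 ≤ Y.card → ¬ BPos P Y → v.S Y = gammaSum P v Y)
    {Y Z : PSet N} (hYn : Y.Nonempty) (hZn : Z.Nonempty) (hYZd : Disjoint Y Z)
    (hYZ : s(Y, Z) ∈ P) :
    (∑ W ∈ (maxF P (Y ∪ Z)).filter (· ⊆ Y), v.S W) +
      ∑ ℓ ∈ (uncovF P (Y ∪ Z)).filter (· ∈ Y), v.S {ℓ} = v.S Y := by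
  have hnpU : ¬ BPos P (Y ∪ Z) := fun h => h s(Y, Z) ⟨Y, Z, rfl, hYn, hZn, hYZd, rfl⟩ hYZ
  by_cases h2Y : 2 ≤ Y.card
  · by_cases hpY : BPos P Y
    · -- Y is itself a maximal positive subsystem of Y ∪ Z
      have hYmax : Y ∈ maxPosBelow P (Y ∪ Z) := maxPos_self hD hYZ hYn hZn hYZd hpY h2Y
      have hf1 : (maxF P (Y ∪ Z)).filter (· ⊆ Y) = {Y} := by
        apply Finset.Subset.antisymm
        · intro W hW
          obtain ⟨hWm, hWY⟩ := Finset.mem_filter.mp hW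
          rw [Finset.mem_singleton]
          by_contra hne
          have hd := maxPos_disjoint hD hnpU (mem_maxF.mp hWm) hYmax hne
          obtain ⟨x, hx⟩ := Finset.card_pos.mp
            (Nat.lt_of_lt_of_le (by norm_num) (mem_maxF.mp hWm).1.2.1)
          exact Finset.disjoint_left.mp hd hx (hWY hx)
        · intro W hW
          rw [Finset.mem_singleton] at hW
          rw [hW]
          exact Finset.mem_filter.mpr ⟨mem_maxF.mpr hYmax, Finset.Subset.refl Y⟩
      have hf2 : (uncovF P (Y ∪ Z)).filter (· ∈ Y) = ∅ := by
        rw [Finset.filter_eq_empty_iff]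
        intro ℓ hℓ hℓY
        exact (Finset.mem_filter.mp hℓ).2 Y hYmax hℓY
      rw [hf1, hf2, Finset.sum_singleton, Finset.sum_empty, add_zero]
    · -- recurse into Γ(Y) via (b)
      have hf1 : (maxF P (Y ∪ Z)).filter (· ⊆ Y) = maxF P Y := by
        ext W
        rw [Finset.mem_filter, mem_maxF, mem_maxF]
        exact maxPos_restrict hD hYZ hYn hZn hYZd hpY
      have hf2 : (uncovF P (Y ∪ Z)).filter (· ∈ Y) = uncovF P Y := by
        ext ℓ
        rw [Finset.mem_filter]
        unfold uncovF
        rw [Finset.mem_filter, Finset.mem_filter]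
        constructor
        · rintro ⟨⟨hℓU, hunc⟩, hℓY⟩
          refine ⟨hℓY, ?_⟩
          intro W hW
          exact hunc W (((maxPos_restrict hD hYZ hYn hZn hYZd hpY).mpr hW).1)
        · rintro ⟨hℓY, hunc⟩
          refine ⟨⟨Finset.mem_union_left _ hℓY, ?_⟩, hℓY⟩
          intro W hW hℓW
          rcases posU_sub hD hYZ hYZd hW.1.2.2 hW.1.1.subset with h | h
          · exact hunc W ((maxPos_restrict hD hYZ hYn hZn hYZd hpY).mp ⟨hW, h⟩) hℓW
          · exact Finset.disjoint_left.mp hYZd hℓY (h hℓW)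
      rw [hf1, hf2, ← gammaSum_eq, ← hb Y h2Y hpY]
  · -- |Y| = 1
    have hY1 : Y.card = 1 := by
      obtain ⟨y, hy⟩ := hYn
      have := Finset.card_pos.mpr ⟨y, hy⟩
      omega
    obtain ⟨ℓ0, rfl⟩ := Finset.card_eq_one.mp hY1
    have hf1 : (maxF P ({ℓ0} ∪ Z)).filter (· ⊆ {ℓ0}) = ∅ := by
      rw [Finset.filter_eq_empty_iff]
      intro W hW hc
      have h2 := (mem_maxF.mp hW).1.2.1
      have := Finset.card_le_card hc
      rw [Finset.card_singleton] at this
      omega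
    have hf2 : (uncovF P ({ℓ0} ∪ Z)).filter (· ∈ ({ℓ0} : PSet N)) = {ℓ0} := by
      apply Finset.Subset.antisymm
      · intro ℓ hℓ
        exact (Finset.mem_filter.mp hℓ).2
      · intro ℓ hℓ
        rw [Finset.mem_singleton] at hℓ
        subst hℓ
        refine Finset.mem_filter.mpr ⟨?_, Finset.mem_singleton_self ℓ⟩
        unfold uncovF
        refine Finset.mem_filter.mpr ⟨Finset.mem_union_left _ (Finset.mem_singleton_self ℓ), ?_⟩
        intro W hW hℓW
        rcases posU_sub hD hYZ hYZd hW.1.2.2 hW.1.1.subset with h | h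
        · have h2 := hW.1.2.1
          have := Finset.card_le_card h
          rw [Finset.card_singleton] at this
          omega
        · exact Finset.disjoint_left.mp hYZd (Finset.mem_singleton_self ℓ) (h hℓW)
    rw [hf1, hf2, Finset.sum_empty, Finset.sum_singleton, zero_add]

end Aux4

/-- For every KC-PMI `P` and entropy vector `S` (extended by the
purification convention), the following are equivalent: (a) `I(Y:Z) = 0` for every MI
instance `{Y,Z} ∈ P`; (b) for every `Y ⊆ ⟦N⟧` with `|Y| ≥ 2` and `β(Y)` not positive,
`S_Y = Σ_{Z ∈ Γ(Y)} S_Z`. -/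
theorem statement14 {N : ℕ} (hN : 2 ≤ N) (P : Set (MI N)) (hP : IsKCPMI P)
    (v : EntropyVec N) :
    (∀ Y Z : PSet N, Y.Nonempty → Z.Nonempty → Disjoint Y Z →
        s(Y, Z) ∈ P → v.I Y Z = 0) ↔
    (∀ Y : PSet N, 2 ≤ Y.card → ¬ BPos P Y → v.S Y = gammaSum P v Y) := by
  obtain ⟨⟨w, hw, hPw⟩, hD⟩ := hP
  constructor
  · intro ha Y hY2 hnp
    exact dir_ab hPw hD v ha hnp
  · intro hb Y Z hYn hZn hYZd hYZP
    have hnpU : ¬ BPos P (Y ∪ Z) := fun h => h s(Y, Z) ⟨Y, Z, rfl, hYn, hZn, hYZd, rfl⟩ hYZP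
    have hU2 : 2 ≤ (Y ∪ Z).card := by
      rw [Finset.card_union_of_disjoint hYZd]
      have h1 := Finset.card_pos.mpr hYn
      have h2 := Finset.card_pos.mpr hZn
      omega
    have hSU := hb (Y ∪ Z) hU2 hnpU
    have hsY := side_sum hPw hD v hb hYn hZn hYZd hYZP
    have hsZ := side_sum hPw hD v hb hZn hYn hYZd.symm
      (by rw [Sym2.eq_swap]; exact hYZP)
    rw [Finset.union_comm Z Y] at hsZ
    have hnonempty : ∀ W ∈ maxF P (Y ∪ Z), W.Nonempty := fun W hW =>
      Finset.card_pos.mp (Nat.lt_of_lt_of_le (by norm_num) (mem_maxF.mp hW).1.2.1)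
    have hsplit1 : (∑ W ∈ maxF P (Y ∪ Z), v.S W) =
        (∑ W ∈ (maxF P (Y ∪ Z)).filter (· ⊆ Y), v.S W) +
          ∑ W ∈ (maxF P (Y ∪ Z)).filter (· ⊆ Z), v.S W := by
      rw [← Finset.sum_filter_add_sum_filter_not (maxF P (Y ∪ Z)) (· ⊆ Y)]
      congr 1
      apply Finset.sum_congr _ (fun _ _ => rfl)
      ext W
      rw [Finset.mem_filter, Finset.mem_filter]
      constructor
      · rintro ⟨hW, hnsub⟩
        refine ⟨hW, ?_⟩
        rcases posU_sub hD hYZP hYZd (mem_maxF.mp hW).1.2.2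
          (mem_maxF.mp hW).1.1.subset with h | h
        · exact absurd h hnsub
        · exact h
      · rintro ⟨hW, hsub⟩
        refine ⟨hW, fun hc => ?_⟩
        obtain ⟨x, hx⟩ := hnonempty W hW
        exact Finset.disjoint_left.mp hYZd (hc hx) (hsub hx)
    have hsplit2 : (∑ ℓ ∈ uncovF P (Y ∪ Z), v.S {ℓ}) =
        (∑ ℓ ∈ (uncovF P (Y ∪ Z)).filter (· ∈ Y), v.S {ℓ}) +
          ∑ ℓ ∈ (uncovF P (Y ∪ Z)).filter (· ∈ Z), v.S {ℓ} := by
      rw [← Finset.sum_filter_add_sum_filter_not (uncovF P (Y ∪ Z)) (· ∈ Y)]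
      congr 1
      apply Finset.sum_congr _ (fun _ _ => rfl)
      ext ℓ
      rw [Finset.mem_filter, Finset.mem_filter]
      constructor
      · rintro ⟨hℓ, hnY⟩
        refine ⟨hℓ, ?_⟩
        have hℓU : ℓ ∈ Y ∪ Z := Finset.mem_of_mem_filter ℓ hℓ
        rcases Finset.mem_union.mp hℓU with h | h
        · exact absurd h hnY
        · exact h
      · rintro ⟨hℓ, hZmem⟩
        exact ⟨hℓ, fun hc => Finset.disjoint_left.mp hYZd hc hZmem⟩
    rw [gammaSum_eq, hsplit1, hsplit2] at hSU
    unfold EntropyVec.I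
    linarith


end HEC
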